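/- arXiv:1103.3296 — 3 statements merged into one kernel-verified Lean document; each statement's English description precedes it below -/
import Mathlib

section
/- Let g ∈ F_q[x] be square-free with g(L_i) ≠ 0 for all i, let e ∈ F_p^n, and let s_e(x) = Σ_i e_i/(x - L_i) mod g(x) be the Goppa syndrome. Fix a nonzero φ ∈ F_p and define σ_φ(x) = Π_i (x - L_i)^{n_i} where n_i ∈ {0,...,p-1} is the canonical lift of e_i/φ ∈ F_p. Then φ·σ_φ'(x) ≡ σ_φ(x)·s_e(x) (mod g(x)). -/
open Polynomial

/-!
Write `D = ∏ᵢ (x - Lᵢ)` and `nᵢ = lift(eᵢ/φ)`. The logarithmic derivative of `σ_φ` gives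
`D·σ_φ' = σ_φ·∑ᵢ nᵢ·D/(x - Lᵢ)`, and `φ·nᵢ = eᵢ` in `F`, so `D·(φ·σ_φ' - σ_φ·s_e)` is `-σ_φ` times
the cleared-denominator syndrome congruence, hence divisible by `g`. Since no `Lᵢ` is a root of `g`,
`D` is coprime to `g` and can be cancelled.
-/

theorem Polynomial.mul_derivative_prod_pow {R ι : Type*} [CommRing R] [DecidableEq ι]
    (s : Finset ι) (f : ι → R[X]) (k : ι → ℕ) :
    (∏ i ∈ s, f i) * derivative (∏ i ∈ s, f i ^ k i) =
      (∏ i ∈ s, f i ^ k i) * ∑ i ∈ s, C (k i : R) * derivative (f i) * ∏ j ∈ s.erase i, f j := by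
  rw [derivative_prod_finset, Finset.mul_sum, Finset.mul_sum]
  refine Finset.sum_congr rfl fun i hi => ?_
  have hpow : C (k i : R) * (f i * f i ^ (k i - 1)) = C (k i : R) * f i ^ k i := by
    rcases Nat.eq_zero_or_pos (k i) with hk | hk
    · simp [hk]
    · rw [← pow_succ', Nat.sub_add_cancel hk]
  rw [derivative_pow, ← Finset.mul_prod_erase s f hi,
    ← Finset.mul_prod_erase s (fun j => f j ^ k j) hi]
  linear_combination (∏ j ∈ s.erase i, f j ^ k j) * (∏ j ∈ s.erase i, f j) * derivative (f i) * hpow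

theorem Polynomial.isCoprime_prod_X_sub_C {F ι : Type*} [Field F] {g : F[X]} (s : Finset ι)
    (a : ι → F) (h : ∀ i ∈ s, ¬ g.IsRoot (a i)) : IsCoprime g (∏ i ∈ s, (X - C (a i))) :=
  IsCoprime.prod_right fun i hi =>
    ((irreducible_X_sub_C (a i)).coprime_iff_not_dvd.2 (dvd_iff_isRoot.not.2 (h i hi))).symm

theorem ZMod.castHom_mul_natCast_val_div {p : ℕ} [Fact p.Prime] {F : Type*} [Ring F] [CharP F p]
    {φ : ZMod p} (hφ : φ ≠ 0) (a : ZMod p) :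
    castHom (dvd_refl p) F φ * ((a / φ).val : F) = castHom (dvd_refl p) F a := by
  rw [ZMod.natCast_val, castHom_apply, castHom_apply, ← cast_mul (dvd_refl p), mul_div_cancel₀ _ hφ]

theorem stmt4_general (p : ℕ) [Fact p.Prime] (F : Type*) [Field F] [CharP F p]
    (n : ℕ) (L : Fin n → F)
    (g : F[X]) (hroot : ∀ i, g.eval (L i) ≠ 0)
    (e : Fin n → ZMod p) (φ : ZMod p) (hφ : φ ≠ 0)
    (s : F[X])
    (hs : g ∣ (∏ i, (X - C (L i))) * s
        - ∑ i, C ((ZMod.castHom (dvd_refl p) F) (e i))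
            * ∏ j ∈ Finset.univ.erase i, (X - C (L j))) :
    g ∣ C ((ZMod.castHom (dvd_refl p) F) φ)
          * derivative (∏ i, (X - C (L i)) ^ (e i / φ).val)
        - (∏ i, (X - C (L i)) ^ (e i / φ).val) * s := by
  set σ := ∏ i, (X - C (L i)) ^ (e i / φ).val
  have hweights : ∑ i, C ((ZMod.castHom (dvd_refl p) F) φ)
        * (C (((e i / φ).val : ℕ) : F) * derivative (X - C (L i))
          * ∏ j ∈ Finset.univ.erase i, (X - C (L j)))
      = ∑ i, C ((ZMod.castHom (dvd_refl p) F) (e i))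
          * ∏ j ∈ Finset.univ.erase i, (X - C (L j)) := by
    refine Finset.sum_congr rfl fun i _ => ?_
    rw [derivative_X_sub_C, mul_one, ← mul_assoc, ← C_mul, ZMod.castHom_mul_natCast_val_div hφ]
  have hcleared : (∏ i, (X - C (L i)))
        * (C ((ZMod.castHom (dvd_refl p) F) φ) * derivative σ - σ * s)
      = -(σ * ((∏ i, (X - C (L i))) * s
          - ∑ i, C ((ZMod.castHom (dvd_refl p) F) (e i))
              * ∏ j ∈ Finset.univ.erase i, (X - C (L j)))) := by
    rw [mul_sub, mul_left_comm, mul_derivative_prod_pow, ← hweights, ← Finset.mul_sum]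
    ring
  have hcop := isCoprime_prod_X_sub_C Finset.univ L fun i _ => hroot i
  exact hcop.dvd_of_dvd_mul_left (hcleared ▸ (hs.mul_left σ).neg_right)

/-- The `φ`-th key equation for square-free Goppa codes over `F_p`: with
`σ_φ(x) = ∏ᵢ (x - Lᵢ)^{lift(eᵢ/φ)}` and `s_e` the Goppa syndrome (characterized by the
cleared-denominator congruence `hs`), one has `φ·σ_φ' ≡ σ_φ·s_e (mod g)`. -/
theorem stmt4 (p : ℕ) [Fact p.Prime] (F : Type*) [Field F] [Fintype F] [CharP F p]
    (n : ℕ) (L : Fin n → F) (hL : Function.Injective L)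
    (g : F[X]) (hg : Squarefree g) (hroot : ∀ i, g.eval (L i) ≠ 0)
    (e : Fin n → ZMod p) (φ : ZMod p) (hφ : φ ≠ 0)
    (s : F[X]) (hsdeg : s.degree < g.degree)
    (hs : g ∣ (∏ i, (X - C (L i))) * s
        - ∑ i, C ((ZMod.castHom (dvd_refl p) F) (e i))
            * ∏ j ∈ Finset.univ.erase i, (X - C (L j))) :
    g ∣ C ((ZMod.castHom (dvd_refl p) F) φ)
          * derivative (∏ i, (X - C (L i)) ^ (e i / φ).val)
        - (∏ i, (X - C (L i)) ^ (e i / φ).val) * s :=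
  stmt4_general p F n L g hroot e φ hφ s hs
end

section
/- If the condition deg(σ_φ) ≤ t must hold for some nonzero φ ∈ F_p for every error pattern of weight w regardless of the distribution of magnitudes, then w ≤ (2/p)t. Concretely: for any w > (2/p)t there exists an error pattern of weight w (with all magnitudes equally frequent) such that for every nonzero φ, deg(σ_φ) = wp/2 > t. -/
/-!
Spread `w = k (p - 1)` error positions so that every nonzero magnitude occurs exactly `k`
times. Dividing by `φ ≠ 0` permutes `ZMod p`, so the exponents of `σ_φ` still take each nonzero
value `k` times, whence `deg σ_φ = k (1 + 2 + ⋯ + (p - 1)) = w p / 2` independently of `φ`.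
-/

open Polynomial Finset

theorem Polynomial.natDegree_prod_X_sub_C_pow {R ι : Type*} [CommRing R] [Nontrivial R]
    (s : Finset ι) (a : ι → R) (m : ι → ℕ) :
    (∏ i ∈ s, (X - C (a i)) ^ m i).natDegree = ∑ i ∈ s, m i := by
  rw [natDegree_prod_of_monic _ _ fun i _ => (monic_X_sub_C (a i)).pow (m i)]
  exact sum_congr rfl fun i _ => by
    rw [(monic_X_sub_C (a i)).natDegree_pow, natDegree_X_sub_C, mul_one]

theorem ZMod.sum_val (n : ℕ) [NeZero n] : ∑ v : ZMod n, v.val = ∑ i ∈ range n, i := by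
  obtain ⟨n, rfl⟩ := Nat.exists_eq_succ_of_ne_zero (NeZero.ne n)
  exact Fin.sum_univ_eq_sum_range (fun i => i) (n + 1)

theorem ZMod.sum_val_div {p : ℕ} [Fact p.Prime] {φ : ZMod p} (hφ : φ ≠ 0) :
    ∑ v : ZMod p, (v / φ).val = ∑ v : ZMod p, v.val :=
  Fintype.sum_equiv (Equiv.divRight₀ φ hφ) _ _ fun _ => rfl

theorem Fintype.sum_comp_eq_nsmul_sum_of_card_fiber {α β M : Type*} [Fintype α] [Fintype β]
    [DecidableEq β] [AddCommMonoid M] {f : α → β} {g : β → M} {k : ℕ}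
    (hf : ∀ b, g b ≠ 0 → #{a | f a = b} = k) :
    ∑ a, g (f a) = k • ∑ b, g b := by
  rw [← Finset.sum_fiberwise' univ f g, smul_sum]
  refine Fintype.sum_congr _ _ fun b => ?_
  rw [sum_const]
  by_cases hb : g b = 0
  · simp [hb]
  · rw [hf b hb]

theorem Fintype.exists_card_fiber_eq {α β : Type*} [Fintype α] [Fintype β] [DecidableEq β]
    {s : Finset β} {b₀ : β} (hb₀ : b₀ ∉ s) {k : ℕ} (h : k * #s ≤ Fintype.card α) :
    ∃ f : α → β, ∀ b ∈ s, #{a | f a = b} = k := by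
  obtain ⟨ι⟩ : Nonempty (Fin k × s ↪ α) :=
    Function.Embedding.nonempty_of_card_le (by simpa using h)
  refine ⟨Function.extend ι (fun x => (x.2 : β)) fun _ => b₀, fun b hb => ?_⟩
  have hfiber : ({a | Function.extend ι (fun x => (x.2 : β)) (fun _ => b₀) a = b} : Finset α)
      = (univ ×ˢ {⟨b, hb⟩}).map ι := by
    ext a
    simp only [mem_filter, mem_univ, true_and, mem_map, mem_product, mem_singleton]
    by_cases ha : ∃ x, ι x = a
    · obtain ⟨x, rfl⟩ := ha
      rw [ι.injective.extend_apply]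
      constructor
      · rintro rfl; exact ⟨x, rfl, rfl⟩
      · rintro ⟨y, hy, hyx⟩
        rw [← ι.injective hyx, hy]
    · rw [Function.extend_apply' _ _ _ ha]
      constructor
      · rintro rfl; exact absurd hb hb₀
      · rintro ⟨y, -, hy⟩; exact absurd ⟨y, hy⟩ ha
  rw [hfiber, card_map, card_product]
  simp

theorem stmt11_general (p : ℕ) [Fact p.Prime] (F : Type*) [Field F]
    (n w t : ℕ) (hdvd : (p - 1) ∣ w) (hn : w ≤ n)
    (L : Fin n → F)
    (hwt : w * p > 2 * t) :
    ∃ e : Fin n → ZMod p,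
      (Finset.univ.filter fun i => e i ≠ 0).card = w ∧
      (∀ v : ZMod p, v ≠ 0 → (Finset.univ.filter fun i => e i = v).card = w / (p - 1)) ∧
      ∀ φ : ZMod p, φ ≠ 0 →
        (∏ i, (X - C (L i)) ^ (e i / φ).val).natDegree = w * p / 2 ∧ t < w * p / 2 := by
  obtain ⟨k, rfl⟩ := hdvd
  have hp : 0 < p - 1 := Nat.sub_pos_of_lt (Fact.out : p.Prime).one_lt
  have hunits : #({v | v ≠ 0} : Finset (ZMod p)) = p - 1 := by
    rw [filter_ne', card_erase_of_mem (mem_univ _), card_univ, ZMod.card]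
  obtain ⟨e, he⟩ := Fintype.exists_card_fiber_eq (α := Fin n) (s := {v : ZMod p | v ≠ 0})
    (b₀ := 0) (by simp) (k := k) (by rwa [hunits, Fintype.card_fin, mul_comm])
  have hfiber : ∀ v : ZMod p, v ≠ 0 → #{i | e i = v} = k := fun v hv => he v (by simpa)
  have hweight : #{i | e i ≠ 0} = (p - 1) * k := by
    rw [card_filter, Fintype.sum_comp_eq_nsmul_sum_of_card_fiber
      (g := fun v => if v ≠ 0 then 1 else 0) fun v hv => hfiber v (by simpa using hv),
      ← card_filter, hunits, smul_eq_mul, mul_comm]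
  refine ⟨e, hweight, fun v hv => by rw [hfiber v hv, Nat.mul_div_cancel_left k hp],
    fun φ hφ => ?_⟩
  have hdegree : (∏ i, (X - C (L i)) ^ (e i / φ).val).natDegree * 2 = (p - 1) * k * p := by
    rw [natDegree_prod_X_sub_C_pow, Fintype.sum_comp_eq_nsmul_sum_of_card_fiber
      (g := fun v => (v / φ).val) fun v hv => hfiber v (by rintro rfl; simp at hv),
      ZMod.sum_val_div hφ, ZMod.sum_val, smul_eq_mul, mul_assoc, sum_range_id_mul_two]
    ring
  rw [← hdegree] at hwt ⊢
  omega

/-- For any `w > (2/p)t` (i.e. `w·p > 2t`) there is an error pattern of weight `w` with all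
magnitudes equally frequent such that for every nonzero `φ`, `deg(σ_φ) = w·p/2 > t`. -/
theorem stmt11 (p : ℕ) [Fact p.Prime] (hp : Odd p) (F : Type*) [Field F]
    (n w t : ℕ) (ht : 0 < t) (hdvd : (p - 1) ∣ w) (hn : w ≤ n)
    (L : Fin n → F) (hL : Function.Injective L)
    (hwt : w * p > 2 * t) :
    ∃ e : Fin n → ZMod p,
      (Finset.univ.filter fun i => e i ≠ 0).card = w ∧
      (∀ v : ZMod p, v ≠ 0 → (Finset.univ.filter fun i => e i = v).card = w / (p - 1)) ∧
      ∀ φ : ZMod p, φ ≠ 0 →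
        (∏ i, (X - C (L i)) ^ (e i / φ).val).natDegree = w * p / 2 ∧ t < w * p / 2 :=
  stmt11_general p F n w t hdvd hn L hwt
end

section
/- Let σ_φ(x) = Π_i (1 − x L_i)^{lift(e_i ξ_i / φ)} where L_i ∈ F_q are nonzero and distinct, ξ_i ∈ F_p \ {0}, and e ∈ F_p^n. Then over F_q[x]/x^r, −φ·σ_φ'(x) ≡ σ_φ(x)·s_e(x) (mod x^r), where s_e(x) = Σ_j e_j D_j/(1 − x L_j) mod x^r with D_j = ξ_j L_j. -/
/-!
Write `P = ∏ᵢ (1 - x Lᵢ)` and `mᵢ = lift(eᵢξᵢ/φ)`. The logarithmic derivative of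
`σ_φ = ∏ᵢ (1 - x Lᵢ)^{mᵢ}` gives `σ_φ' · P = -σ_φ · ∑ᵢ mᵢ Lᵢ ∏_{k ≠ i} (1 - x Lₖ)`, and since
`φ mᵢ = eᵢξᵢ` in characteristic `p`, this reads `φ σ_φ' P = -σ_φ S` with `S` the numerator of
`s_e`. Hence `(φ σ_φ' + σ_φ s) P = σ_φ (P s - S)` is divisible by `x^r`, and `P` is a unit
modulo `x^r` because `P(0) = 1`.
-/

open Polynomial

namespace Polynomial

theorem derivative_pow_mul_self {R : Type*} [CommRing R] (f : R[X]) (m : ℕ) :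
    derivative (f ^ m) * f = C (m : R) * f ^ m * derivative f := by
  cases m with
  | zero => simp
  | succ k => rw [derivative_pow_succ, Nat.cast_succ, pow_succ]; ring

theorem derivative_prod_pow_mul_prod {R ι : Type*} [CommRing R] [DecidableEq ι]
    (s : Finset ι) (f : ι → R[X]) (m : ι → ℕ) :
    derivative (∏ i ∈ s, f i ^ m i) * ∏ i ∈ s, f i =
      (∏ i ∈ s, f i ^ m i) * ∑ i ∈ s, C (m i : R) * derivative (f i) * ∏ k ∈ s.erase i, f k := by
  rw [derivative_prod_finset, Finset.sum_mul, Finset.mul_sum]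
  refine Finset.sum_congr rfl fun i hi => ?_
  rw [← Finset.mul_prod_erase s f hi, ← Finset.mul_prod_erase s (fun i => f i ^ m i) hi]
  linear_combination (∏ k ∈ s.erase i, f k ^ m k) * (∏ k ∈ s.erase i, f k) *
    derivative_pow_mul_self (f i) (m i)

theorem isCoprime_X_pow_of_eval_zero_ne_zero {K : Type*} [Field K] {q : K[X]}
    (hq : q.eval 0 ≠ 0) (r : ℕ) : IsCoprime (X ^ r) q := by
  refine IsCoprime.pow_left ?_
  rwa [prime_X.coprime_iff_not_dvd, X_dvd_iff, coeff_zero_eq_eval_zero]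

end Polynomial

theorem stmt16_general (p : ℕ) [Fact p.Prime] (F : Type*) [Field F] [CharP F p]
    (n r : ℕ)
    (L : Fin n → F)
    (ξ : Fin n → ZMod p)
    (e : Fin n → ZMod p) (φ : ZMod p) (hφ : φ ≠ 0)
    (s : F[X])
    (hs : (X ^ r : F[X]) ∣ (∏ j, (1 - X * C (L j))) * s
        - ∑ j, C ((ZMod.castHom (dvd_refl p) F) (e j)
              * (ZMod.castHom (dvd_refl p) F) (ξ j) * L j)
            * ∏ k ∈ Finset.univ.erase j, (1 - X * C (L k))) :
    (X ^ r : F[X]) ∣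
        C ((ZMod.castHom (dvd_refl p) F) φ)
          * derivative (∏ i, (1 - X * C (L i)) ^ (e i * ξ i / φ).val)
        + (∏ i, (1 - X * C (L i)) ^ (e i * ξ i / φ).val) * s := by
  set ψ := ZMod.castHom (dvd_refl p) F
  set σ := ∏ i, (1 - X * C (L i)) ^ (e i * ξ i / φ).val
  set P := ∏ j, (1 - X * C (L j))
  set S := ∑ j, C (ψ (e j) * ψ (ξ j) * L j) * ∏ k ∈ Finset.univ.erase j, (1 - X * C (L k))
  have hmul : ∀ i, ψ φ * ((e i * ξ i / φ).val : F) = ψ (e i) * ψ (ξ i) := fun i => by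
    rw [ZMod.natCast_val, ← ZMod.castHom_apply (h := dvd_refl p), ← map_mul, ← map_mul,
      mul_div_cancel₀ _ hφ]
  have hterm : ∀ i, C (ψ φ) * C ((e i * ξ i / φ).val : F) * derivative (1 - X * C (L i)) =
      -C (ψ (e i) * ψ (ξ i) * L i) := fun i => by
    rw [← hmul i]
    simp only [derivative_sub, derivative_one, derivative_mul, derivative_X, derivative_C,
      map_mul]
    ring
  have hkey : C (ψ φ) * derivative σ * P = -(σ * S) := by
    rw [mul_assoc, derivative_prod_pow_mul_prod, mul_left_comm, Finset.mul_sum, ← mul_neg]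
    congr 1
    simp only [S, ← Finset.sum_neg_distrib]
    refine Finset.sum_congr rfl fun i _ => ?_
    rw [← mul_assoc, ← mul_assoc, hterm, neg_mul]
  have hcop : IsCoprime (X ^ r) P :=
    isCoprime_X_pow_of_eval_zero_ne_zero (by simp [P, eval_prod]) r
  refine hcop.dvd_of_dvd_mul_right ?_
  have hclear : (C (ψ φ) * derivative σ + σ * s) * P = σ * (P * s - S) := by
    linear_combination hkey
  exact hclear ▸ hs.mul_left σ

/-- Key equation for the alternant family: with
`σ_φ(x) = ∏ᵢ(1 - x·Lᵢ)^{lift(eᵢξᵢ/φ)}` and `s_e(x) ≡ ∑ⱼ eⱼDⱼ/(1 - x·Lⱼ) (mod x^r)` where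
`Dⱼ = ξⱼ·Lⱼ` (the congruence given in cleared-denominator form), one has
`-φ·σ_φ' ≡ σ_φ·s_e (mod x^r)`. -/
theorem stmt16 (p : ℕ) [Fact p.Prime] (F : Type*) [Field F] [Fintype F] [CharP F p]
    (n r : ℕ) (hr : 1 ≤ r)
    (L : Fin n → F) (hL : Function.Injective L) (hL0 : ∀ i, L i ≠ 0)
    (ξ : Fin n → ZMod p) (hξ : ∀ i, ξ i ≠ 0)
    (e : Fin n → ZMod p) (φ : ZMod p) (hφ : φ ≠ 0)
    (s : F[X])
    (hs : (X ^ r : F[X]) ∣ (∏ j, (1 - X * C (L j))) * s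
        - ∑ j, C ((ZMod.castHom (dvd_refl p) F) (e j)
              * (ZMod.castHom (dvd_refl p) F) (ξ j) * L j)
            * ∏ k ∈ Finset.univ.erase j, (1 - X * C (L k))) :
    (X ^ r : F[X]) ∣
        C ((ZMod.castHom (dvd_refl p) F) φ)
          * derivative (∏ i, (1 - X * C (L i)) ^ (e i * ξ i / φ).val)
        + (∏ i, (1 - X * C (L i)) ^ (e i * ξ i / φ).val) * s :=
  stmt16_general p F n r L ξ e φ hφ s hs
end
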